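/- Under the assumptions of the USTM lemma (model function φ_k, (δ_k,0)-oracle with δ_k = α_{k+1}ε/(4A_{k+1})), if t* = argmin_{t ∈ dom h} Φ(t) + h(t), then for every k > 0: Φ(t^k) + h(t^k) + (1/(2A_k))‖t* − u^k‖₂² ≤ Φ(t*) + h(t*) + (1/(2A_k))‖t* − t⁰‖₂² + 3ε/4. -/

import Mathlib

open Real Filter Topology Set

/-!
The potential `Aₖ (Φ + h)(tᵏ) - φₖ(uᵏ)` grows by at most `3εαₖ₊₁/4` per step. The upper half of
the oracle and the stopping criterion bound `Aₖ₊₁ Φ(tᵏ⁺¹)` through the model at `yᵏ⁺¹`, convexity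
of `h` splits `h(tᵏ⁺¹)`, and the lower half of the oracle compares the model at `tᵏ` with `Φ(tᵏ)`.
Since `tᵏ⁺¹ - yᵏ⁺¹ = (αₖ₊₁/Aₖ₊₁)(uᵏ⁺¹ - uᵏ)` and `Lₖ₊₁αₖ₊₁² = Aₖ₊₁`, the quadratic term of the
stopping criterion is `½‖uᵏ⁺¹ - uᵏ‖²`, which is paid for by the `1`-strong convexity of `φₖ` at its
minimiser `uᵏ`. At `t*`, strong convexity of `φₖ` at `uᵏ` and the bound
`φₖ ≤ Aₖ (Φ + h) + ½‖· - t⁰‖²` (from the lower half of the oracle) give the claim after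
dividing by `Aₖ`.
-/

section

variable {E : Type*} [NormedAddCommGroup E] [InnerProductSpace ℝ E]

section Convexity

variable {s : Set E} {f g : E → ℝ} {m : ℝ}

theorem strongConvexOn_half_norm_sub_sq (hs : Convex ℝ s) (c : E) :
    StrongConvexOn s 1 fun x => 1 / 2 * ‖x - c‖ ^ 2 := by
  rw [strongConvexOn_iff_convex]
  refine (((innerSL ℝ (-c)).toLinearMap.convexOn hs).add_const (1 / 2 * ‖c‖ ^ 2)).congr
    fun x _ => ?_
  simp only [Pi.add_apply, ContinuousLinearMap.toLinearMap_innerSL_apply, coe_innerₛₗ_apply,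
    map_neg, ContinuousLinearMap.toLinearMap_neg, LinearMap.coe_neg, Pi.neg_apply, one_div,
    norm_sub_sq_real, real_inner_comm]
  ring

theorem StrongConvexOn.add_convexOn (hf : StrongConvexOn s m f) (hg : ConvexOn ℝ s g) :
    StrongConvexOn s m (f + g) := by
  have := hf.add hg.uniformConvexOn_zero
  rwa [add_zero] at this

theorem StrongConvexOn.add_sq_le_of_isMinOn {u t : E} (hf : StrongConvexOn s m f) (hu : u ∈ s)
    (hmin : IsMinOn f s u) (ht : t ∈ s) : f u + m / 2 * ‖t - u‖ ^ 2 ≤ f t := by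
  have hlim : Tendsto (fun τ : ℝ => f u + (1 - τ) * (m / 2 * ‖t - u‖ ^ 2)) (𝓝[>] 0)
      (𝓝 (f u + m / 2 * ‖t - u‖ ^ 2)) := by
    have hcont : Continuous fun τ : ℝ => f u + (1 - τ) * (m / 2 * ‖t - u‖ ^ 2) := by fun_prop
    simpa using (hcont.tendsto 0).mono_left nhdsWithin_le_nhds
  refine le_of_tendsto hlim ?_
  filter_upwards [Ioo_mem_nhdsGT zero_lt_one] with τ ⟨hτ0, hτ1⟩
  have hseg := hf.2 hu ht (sub_nonneg.2 hτ1.le) hτ0.le (sub_add_cancel 1 τ)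
  have hle : f u ≤ f ((1 - τ) • u + τ • t) :=
    hmin (hf.1 hu ht (sub_nonneg.2 hτ1.le) hτ0.le (sub_add_cancel 1 τ))
  rw [norm_sub_rev, smul_eq_mul, smul_eq_mul] at hseg
  refine le_of_mul_le_mul_left ?_ hτ0
  linarith

theorem ConvexOn.const_add_inner_sub_add {a : ℝ} (hf : ConvexOn ℝ s f) (ha : 0 ≤ a) (c : ℝ)
    (v y : E) : ConvexOn ℝ s fun t => a * (c + inner ℝ v (t - y) + f t) := by
  have hlin : ConvexOn ℝ s fun t => c + inner ℝ v (t - y) :=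
    (((innerSL ℝ v).toLinearMap.convexOn hf.1).add_const (c - inner ℝ v y)).congr fun t _ => by
      simp only [Pi.add_apply, ContinuousLinearMap.toLinearMap_innerSL_apply, coe_innerₛₗ_apply,
        inner_sub_right]
      ring
  exact (hlin.add hf).smul ha

theorem ConvexOn.mul_map_inv_smul_add_le {a b : ℝ} {x y : E} (hf : ConvexOn ℝ s f) (hx : x ∈ s)
    (hy : y ∈ s) (ha : 0 ≤ a) (hb : 0 ≤ b) (hab : 0 < a + b) :
    (a + b) * f ((a + b)⁻¹ • (a • x + b • y)) ≤ a * f x + b * f y := by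
  have hseg := hf.2 hx hy (div_nonneg ha hab.le) (div_nonneg hb hab.le) (by field_simp)
  rw [smul_add, smul_smul, smul_smul, ← div_eq_inv_mul, ← div_eq_inv_mul]
  calc (a + b) * f ((a / (a + b)) • x + (b / (a + b)) • y)
      ≤ (a + b) * ((a / (a + b)) • f x + (b / (a + b)) • f y) := by gcongr
    _ = a * f x + b * f y := by simp only [smul_eq_mul]; field_simp

end Convexity

theorem ustm_potential_step {D : Set E} {h Φ Φt : E → ℝ} {v t u u' y t' : E}
    {a a' α L ε : ℝ} (hh : ConvexOn ℝ D h) (ha : 0 ≤ a) (hα : 0 < α) (ha' : a' = a + α)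
    (hL : L * α ^ 2 = a')
    (hy : y = a'⁻¹ • (α • u + a • t)) (ht' : t' = a'⁻¹ • (α • u' + a • t))
    (htD : t ∈ D) (hu'D : u' ∈ D)
    (hlow : Φt y + inner ℝ v (t - y) ≤ Φ t)
    (hup : Φ t' ≤ Φt t' + α * ε / (4 * a'))
    (hstop : Φt t' ≤ Φt y + inner ℝ v (t' - y) + L / 2 * ‖t' - y‖ ^ 2 + α / (2 * a') * ε) :
    a' * (Φ t' + h t') ≤ a * (Φ t + h t) + α * (Φt y + inner ℝ v (u' - y) + h u')
      + 1 / 2 * ‖u' - u‖ ^ 2 + 3 / 4 * ε * α := by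
  have ha'pos : 0 < a' := by linarith
  have hstep : t' - y = (α / a') • (u' - u) := by
    rw [ht', hy, ← smul_sub, div_eq_inv_mul, mul_smul]
    congr 1
    module
  have hsplit : a' • (t' - y) = a • (t - y) + α • (u' - y) := by
    rw [smul_sub, ht', smul_inv_smul₀ ha'pos.ne', ha']
    module
  have hinner : a' * inner ℝ v (t' - y) = a * inner ℝ v (t - y) + α * inner ℝ v (u' - y) := by
    simpa only [inner_add_right, real_inner_smul_right] using congrArg (inner ℝ v) hsplit
  have hnorm : L * a' / 2 * ‖t' - y‖ ^ 2 = 1 / 2 * ‖u' - u‖ ^ 2 := by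
    rw [hstep, norm_smul, norm_of_nonneg (div_pos hα ha'pos).le, mul_pow]
    field_simp
    linear_combination ‖u' - u‖ ^ 2 * hL
  have hconv : a' * h t' ≤ α * h u' + a * h t := by
    rw [ht', ha', add_comm a α]
    exact hh.mul_map_inv_smul_add_le hu'D htD hα.le ha (by linarith)
  have hup' : a' * Φ t' ≤ a' * Φt t' + α * ε / 4 := by
    have := mul_le_mul_of_nonneg_left hup ha'pos.le
    field_simp at this ⊢
    linarith
  have hstop' : a' * Φt t' ≤ a' * (Φt y + inner ℝ v (t' - y)) + L * a' / 2 * ‖t' - y‖ ^ 2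
      + α / 2 * ε := by
    have := mul_le_mul_of_nonneg_left hstop ha'pos.le
    field_simp at this ⊢
    linarith
  have hlow' := mul_le_mul_of_nonneg_left hlow ha
  have hsum : a' * Φt y = a * Φt y + α * Φt y := by rw [ha']; ring
  linarith

section Iterates

variable {D : Set E} {h Φ Φt : E → ℝ} {g : E → E} {α A L : ℕ → ℝ} {tseq useq yseq : ℕ → E} {t0 : E}
  {φ : ℕ → E → ℝ} {ε : ℝ}

theorem ustm_weight_nonneg (hA0 : A 0 = 0) (hAs : ∀ k, A (k + 1) = A k + α (k + 1))
    (hαpos : ∀ k, 0 < α (k + 1)) (k : ℕ) : 0 ≤ A k := by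
  have hmono : Monotone A := monotone_nat_of_le_succ fun k => by rw [hAs]; linarith [hαpos k]
  exact hA0 ▸ hmono k.zero_le

theorem ustm_model_strongConvexOn (hh : ConvexOn ℝ D h) (hαpos : ∀ k, 0 < α (k + 1))
    (hφ0 : ∀ t, φ 0 t = (1 / 2) * ‖t - t0‖ ^ 2)
    (hφs : ∀ k t, φ (k + 1) t = φ k t +
        α (k + 1) * (Φt (yseq (k + 1)) +
          (inner ℝ (g (yseq (k + 1))) (t - yseq (k + 1)) : ℝ) + h t))
    (k : ℕ) : StrongConvexOn D 1 (φ k) := by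
  induction k with
  | zero =>
    rw [funext hφ0]
    exact strongConvexOn_half_norm_sub_sq hh.1 t0
  | succ k ih =>
    rw [funext (hφs k)]
    exact ih.add_convexOn (hh.const_add_inner_sub_add (hαpos k).le _ _ _)

theorem ustm_model_growth (hh : ConvexOn ℝ D h) (hαpos : ∀ k, 0 < α (k + 1))
    (hφ0 : ∀ t, φ 0 t = (1 / 2) * ‖t - t0‖ ^ 2)
    (hφs : ∀ k t, φ (k + 1) t = φ k t +
        α (k + 1) * (Φt (yseq (k + 1)) +
          (inner ℝ (g (yseq (k + 1))) (t - yseq (k + 1)) : ℝ) + h t))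
    (hu0 : useq 0 = t0)
    (hu : ∀ k, useq (k + 1) ∈ D ∧ ∀ t ∈ D, φ (k + 1) (useq (k + 1)) ≤ φ (k + 1) t)
    (k : ℕ) {t : E} (ht : t ∈ D) : φ k (useq k) + 1 / 2 * ‖t - useq k‖ ^ 2 ≤ φ k t := by
  cases k with
  | zero => simp [hu0, hφ0]
  | succ k =>
    simpa using (ustm_model_strongConvexOn hh hαpos hφ0 hφs (k + 1)).add_sq_le_of_isMinOn
      (hu k).1 (hu k).2 ht

theorem ustm_model_le (hA0 : A 0 = 0) (hAs : ∀ k, A (k + 1) = A k + α (k + 1))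
    (hαpos : ∀ k, 0 < α (k + 1)) (hφ0 : ∀ t, φ 0 t = (1 / 2) * ‖t - t0‖ ^ 2)
    (hφs : ∀ k t, φ (k + 1) t = φ k t +
        α (k + 1) * (Φt (yseq (k + 1)) +
          (inner ℝ (g (yseq (k + 1))) (t - yseq (k + 1)) : ℝ) + h t))
    {t : E} (hlow : ∀ k, Φt (yseq (k + 1)) +
        (inner ℝ (g (yseq (k + 1))) (t - yseq (k + 1)) : ℝ) ≤ Φ t)
    (k : ℕ) : φ k t ≤ A k * (Φ t + h t) + 1 / 2 * ‖t - t0‖ ^ 2 := by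
  induction k with
  | zero => simp [hφ0, hA0]
  | succ k ih =>
    rw [hφs, hAs]
    linarith [mul_le_mul_of_nonneg_left (hlow k) (hαpos k).le]

theorem ustm_potential_le (hh : ConvexOn ℝ D h) (hA0 : A 0 = 0)
    (hAs : ∀ k, A (k + 1) = A k + α (k + 1)) (hαpos : ∀ k, 0 < α (k + 1))
    (hαL : ∀ k, L (k + 1) * α (k + 1) ^ 2 = A (k + 1)) (hu0 : useq 0 = t0)
    (hφ0 : ∀ t, φ 0 t = (1 / 2) * ‖t - t0‖ ^ 2)
    (hφs : ∀ k t, φ (k + 1) t = φ k t +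
        α (k + 1) * (Φt (yseq (k + 1)) +
          (inner ℝ (g (yseq (k + 1))) (t - yseq (k + 1)) : ℝ) + h t))
    (hy : ∀ k, yseq (k + 1) = (A (k + 1))⁻¹ • (α (k + 1) • useq k + A k • tseq k))
    (ht : ∀ k, tseq (k + 1) = (A (k + 1))⁻¹ • (α (k + 1) • useq (k + 1) + A k • tseq k))
    (hu : ∀ k, useq (k + 1) ∈ D ∧ ∀ t ∈ D, φ (k + 1) (useq (k + 1)) ≤ φ (k + 1) t)
    (horacle : ∀ k, ∀ t ∈ D, ∀ t' ∈ D,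
        Φ t' ≤ Φt t' + α (k + 1) * ε / (4 * A (k + 1)) ∧
        Φt t + (inner ℝ (g t) (t' - t) : ℝ) ≤ Φ t')
    (hstop : ∀ k, Φt (tseq (k + 1)) ≤ Φt (yseq (k + 1)) +
        (inner ℝ (g (yseq (k + 1))) (tseq (k + 1) - yseq (k + 1)) : ℝ) +
        L (k + 1) / 2 * ‖tseq (k + 1) - yseq (k + 1)‖ ^ 2 +
        α (k + 1) / (2 * A (k + 1)) * ε)
    (htD : ∀ k, tseq k ∈ D) (hyD : ∀ k, yseq (k + 1) ∈ D) (k : ℕ) :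
    A k * (Φ (tseq k) + h (tseq k)) ≤ φ k (useq k) + 3 / 4 * ε * A k := by
  induction k with
  | zero => simp [hA0, hφ0]
  | succ k ih =>
    have hdescent := ustm_potential_step hh (ustm_weight_nonneg hA0 hAs hαpos k) (hαpos k)
      (hAs k) (hαL k) (hy k) (ht k) (htD k) (hu k).1 (horacle k _ (hyD k) _ (htD k)).2
      (horacle k _ (hyD k) _ (htD (k + 1))).1 (hstop k)
    have hgrowth := ustm_model_growth hh hαpos hφ0 hφs hu0 hu k (hu k).1
    have hslack : 3 / 4 * ε * A (k + 1) = 3 / 4 * ε * A k + 3 / 4 * ε * α (k + 1) := by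
      rw [hAs]; ring
    rw [hφs]
    linarith

end Iterates

end

theorem stmt9_general {E : Type*} [NormedAddCommGroup E] [InnerProductSpace ℝ E]
    (D : Set E) (h : E → ℝ) (hh : ConvexOn ℝ D h)
    (Φ : E → ℝ)
    (ε : ℝ)
    (Φt : E → ℝ) (g : E → E)  -- inexact oracle Φ̃, ∇̃Φ
    (α A L : ℕ → ℝ) (tseq useq yseq : ℕ → E) (t0 : E)
    (φ : ℕ → E → ℝ)
    (hA0 : A 0 = 0) (hAs : ∀ k, A (k + 1) = A k + α (k + 1))
    (hαpos : ∀ k, 0 < α (k + 1))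
    (hαL : ∀ k, L (k + 1) * α (k + 1) ^ 2 = A (k + 1))
    (hu0 : useq 0 = t0)
    (hφ0 : ∀ t, φ 0 t = (1 / 2) * ‖t - t0‖ ^ 2)
    (hφs : ∀ k t, φ (k + 1) t = φ k t +
        α (k + 1) * (Φt (yseq (k + 1)) +
          (inner ℝ (g (yseq (k + 1))) (t - yseq (k + 1)) : ℝ) + h t))
    (hy : ∀ k, yseq (k + 1) = (A (k + 1))⁻¹ • (α (k + 1) • useq k + A k • tseq k))
    (ht : ∀ k, tseq (k + 1) = (A (k + 1))⁻¹ • (α (k + 1) • useq (k + 1) + A k • tseq k))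
    (hu : ∀ k, useq (k + 1) ∈ D ∧ ∀ t ∈ D, φ (k + 1) (useq (k + 1)) ≤ φ (k + 1) t)
    -- (δₖ,0)-inexact oracle with δₖ = α_{k+1} ε / (4 A_{k+1})
    (horacle : ∀ k, ∀ t ∈ D, ∀ t' ∈ D,
        Φ t' ≤ Φt t' + α (k + 1) * ε / (4 * A (k + 1)) ∧
        Φt t + (inner ℝ (g t) (t' - t) : ℝ) ≤ Φ t')
    -- inner stopping criterion
    (hstop : ∀ k, Φt (tseq (k + 1)) ≤ Φt (yseq (k + 1)) +
        (inner ℝ (g (yseq (k + 1))) (tseq (k + 1) - yseq (k + 1)) : ℝ) +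
        L (k + 1) / 2 * ‖tseq (k + 1) - yseq (k + 1)‖ ^ 2 +
        α (k + 1) / (2 * A (k + 1)) * ε)
    (htD : ∀ k, tseq k ∈ D) (hyD : ∀ k, yseq (k + 1) ∈ D) :
    ∀ tstar ∈ D, (∀ t ∈ D, Φ tstar + h tstar ≤ Φ t + h t) →
      ∀ k : ℕ, 0 < k →
        Φ (tseq k) + h (tseq k) + (1 / (2 * A k)) * ‖tstar - useq k‖ ^ 2 ≤
          Φ tstar + h tstar + (1 / (2 * A k)) * ‖tstar - t0‖ ^ 2 + 3 * ε / 4 := by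
  intro tstar htstar _ k hk
  obtain ⟨m, rfl⟩ := Nat.exists_eq_add_one_of_ne_zero hk.ne'
  have hA : 0 < A (m + 1) := by
    rw [hAs]
    linarith [ustm_weight_nonneg hA0 hAs hαpos m, hαpos m]
  have hpotential := ustm_potential_le hh hA0 hAs hαpos hαL hu0 hφ0 hφs hy ht hu horacle hstop
    htD hyD (m + 1)
  have hgrowth := ustm_model_growth hh hαpos hφ0 hφs hu0 hu (m + 1) htstar
  have hmodel := ustm_model_le hA0 hAs hαpos hφ0 hφs
    (fun k => (horacle k _ (hyD k) tstar htstar).2) (m + 1)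
  refine le_of_mul_le_mul_left ?_ hA
  field_simp
  linarith

/-- Convergence bound of USTM at the minimizer with a (δₖ,0)-inexact oracle (Lemma 3 of the paper):
`Φ(tᵏ) + h(tᵏ) ≤ (1/Aₖ)φₖ(t) − (1/(2Aₖ))‖t − uᵏ‖² + 3ε/4` for all `t ∈ dom h`. -/
theorem stmt9 {E : Type*} [NormedAddCommGroup E] [InnerProductSpace ℝ E]
    (D : Set E) (h : E → ℝ) (hh : ConvexOn ℝ D h)
    (Φ : E → ℝ) (hΦ : ConvexOn ℝ D Φ)
    (ε : ℝ) (hε : 0 < ε)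
    (Φt : E → ℝ) (g : E → E)  -- inexact oracle Φ̃, ∇̃Φ
    (α A L : ℕ → ℝ) (tseq useq yseq : ℕ → E) (t0 : E)
    (φ : ℕ → E → ℝ)
    (hA0 : A 0 = 0) (hAs : ∀ k, A (k + 1) = A k + α (k + 1))
    (hαpos : ∀ k, 0 < α (k + 1)) (hLpos : ∀ k, 0 < L (k + 1))
    (hαL : ∀ k, L (k + 1) * α (k + 1) ^ 2 = A (k + 1))
    (ht0 : tseq 0 = t0) (hu0 : useq 0 = t0)
    (hφ0 : ∀ t, φ 0 t = (1 / 2) * ‖t - t0‖ ^ 2)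
    (hφs : ∀ k t, φ (k + 1) t = φ k t +
        α (k + 1) * (Φt (yseq (k + 1)) +
          (inner ℝ (g (yseq (k + 1))) (t - yseq (k + 1)) : ℝ) + h t))
    (hy : ∀ k, yseq (k + 1) = (A (k + 1))⁻¹ • (α (k + 1) • useq k + A k • tseq k))
    (ht : ∀ k, tseq (k + 1) = (A (k + 1))⁻¹ • (α (k + 1) • useq (k + 1) + A k • tseq k))
    (hu : ∀ k, useq (k + 1) ∈ D ∧ ∀ t ∈ D, φ (k + 1) (useq (k + 1)) ≤ φ (k + 1) t)
    -- (δₖ,0)-inexact oracle with δₖ = α_{k+1} ε / (4 A_{k+1})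
    (horacle : ∀ k, ∀ t ∈ D, ∀ t' ∈ D,
        Φ t' ≤ Φt t' + α (k + 1) * ε / (4 * A (k + 1)) ∧
        Φt t + (inner ℝ (g t) (t' - t) : ℝ) ≤ Φ t')
    -- inner stopping criterion
    (hstop : ∀ k, Φt (tseq (k + 1)) ≤ Φt (yseq (k + 1)) +
        (inner ℝ (g (yseq (k + 1))) (tseq (k + 1) - yseq (k + 1)) : ℝ) +
        L (k + 1) / 2 * ‖tseq (k + 1) - yseq (k + 1)‖ ^ 2 +
        α (k + 1) / (2 * A (k + 1)) * ε)
    (htD : ∀ k, tseq k ∈ D) (hyD : ∀ k, yseq (k + 1) ∈ D) :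
    ∀ tstar ∈ D, (∀ t ∈ D, Φ tstar + h tstar ≤ Φ t + h t) →
      ∀ k : ℕ, 0 < k →
        Φ (tseq k) + h (tseq k) + (1 / (2 * A k)) * ‖tstar - useq k‖ ^ 2 ≤
          Φ tstar + h tstar + (1 / (2 * A k)) * ‖tstar - t0‖ ^ 2 + 3 * ε / 4 :=
  stmt9_general D h hh Φ ε Φt g α A L tseq useq yseq t0 φ hA0 hAs hαpos hαL hu0 hφ0 hφs hy ht hu
    horacle hstop htD hyD
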